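/- arXiv:1811.00985 — 13 statements merged into one kernel-verified Lean document; each statement's English description precedes it below -/
import Mathlib

section
/- Let char F ≠ 3. An algebra (A, M) is terminal, i.e. [[[M,a],M],M] = 0 for all a ∈ A (in the Kantor sense), if and only if A is conservative with associated multiplication M*(x,y) = (2/3)xy + (1/3)yx. -/
/-- `[φ,B](x,y) = φ(B(x,y)) − B(φ(x),y) − B(x,φ(y))`. -/
def opBr {V : Type*} [AddCommGroup V] (φ : V → V) (B : V → V → V) : V → V → V :=
  fun x y => φ (B x y) - B (φ x) y - B x (φ y)

/-- The Kantor bracket of two bilinear operations: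
`[B,C](x,y,z) = B(C(x,y),z)+B(x,C(y,z))+B(y,C(x,z))−C(B(x,y),z)−C(x,B(y,z))−C(y,B(x,z))`. -/
def brBB {V : Type*} [AddCommGroup V] (B C : V → V → V) : V → V → V → V :=
  fun x y z =>
    B (C x y) z + B x (C y z) + B y (C x z) - C (B x y) z - C x (B y z) - C y (B x z)

section aux

variable {A : Type*} [NonUnitalNonAssocRing A]

/-- `3·[L_b,[L_a,M]] + [L_{2ab+ba},M] = −2·[[L_a,M],M](b,·,·) − [[L_b,M],M](a,·,·)`. -/
lemma key1 (a b x y : A) :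
    (3 : ℤ) • (opBr (fun z : A => b * z) (opBr (fun z : A => a * z) (fun u v : A => u * v)) x y)
      + opBr (fun z : A => (2 • (a * b) + b * a) * z) (fun u v : A => u * v) x y
    = -(2 • brBB (opBr (fun z : A => a * z) (fun u v : A => u * v)) (fun u v : A => u * v) b x y)
      - brBB (opBr (fun z : A => b * z) (fun u v : A => u * v)) (fun u v : A => u * v) a x y := by
  simp only [opBr, brBB, two_smul, add_mul, mul_add, sub_mul, mul_sub, smul_add, smul_sub]
  abel

/-- `3·[[L_a,M],M](x,y,z) = −2·C(a,x,y,z) + C(x,a,y,z)` where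
`C(a,b,y,z) = 3·[L_b,[L_a,M]](y,z) + [L_{2ab+ba},M](y,z)`. -/
lemma key2 (a x y z : A) :
    (3 : ℤ) • brBB (opBr (fun w : A => a * w) (fun u v : A => u * v)) (fun u v : A => u * v) x y z
    = -(2 • ((3 : ℤ) • (opBr (fun w : A => x * w)
            (opBr (fun w : A => a * w) (fun u v : A => u * v)) y z)
          + opBr (fun w : A => (2 • (a * x) + x * a) * w) (fun u v : A => u * v) y z))
      + ((3 : ℤ) • (opBr (fun w : A => a * w)
            (opBr (fun w : A => x * w) (fun u v : A => u * v)) y z)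
          + opBr (fun w : A => (2 • (x * a) + a * x) * w) (fun u v : A => u * v) y z) := by
  simp only [opBr, brBB, two_smul, add_mul, mul_add, sub_mul, mul_sub, smul_add, smul_sub]
  abel

end aux

/-- Over a field of characteristic ≠ 3, an algebra is terminal
(`[[[M,a],M],M] = 0` for all `a`) iff it is conservative with associated
multiplication `x*y = (2/3)xy + (1/3)yx`. -/
theorem stmt4 {F A : Type*} [Field F] [NonUnitalNonAssocRing A] [Module F A]
    [SMulCommClass F A A] [IsScalarTower F A A] (hchar : (3 : F) ≠ 0) :
    (∀ a : A, brBB (opBr (fun x : A => a * x) (fun x y : A => x * y)) (fun x y : A => x * y) = 0)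
    ↔
    (∀ a b : A,
      opBr (fun x : A => b * x) (opBr (fun x : A => a * x) (fun x y : A => x * y))
        = - opBr (fun x : A => ((3 : F)⁻¹ • (2 • (a * b) + b * a)) * x)
            (fun x y : A => x * y)) := by
  have cancel3 : ∀ u v : A, (3 : F) • u = (3 : F) • v → u = v := by
    intro u v h
    have := congrArg (fun w : A => (3 : F)⁻¹ • w) h
    simpa [smul_smul, inv_mul_cancel₀ hchar] using this
  have h3z : ∀ u : A, (3 : F) • u = (3 : ℤ) • u := by
    intro u
    rw [show ((3 : F)) = ((3 : ℤ) : F) by norm_num, Int.cast_smul_eq_zsmul]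
  -- the scaled commutator term: `[L_{3⁻¹•d}, M] (x,y) = 3⁻¹ • [L_d, M] (x,y)`
  have hscale : ∀ (d x y : A),
      opBr (fun z : A => ((3 : F)⁻¹ • d) * z) (fun u v : A => u * v) x y
        = (3 : F)⁻¹ • opBr (fun z : A => d * z) (fun u v : A => u * v) x y := by
    intro d x y
    simp only [opBr, smul_mul_assoc, mul_smul_comm, smul_sub]
  constructor
  · intro h a b
    funext x y
    have T1 : brBB (opBr (fun z : A => a * z) (fun u v : A => u * v))
        (fun u v : A => u * v) b x y = 0 := by rw [h a]; rfl
    have T2 : brBB (opBr (fun z : A => b * z) (fun u v : A => u * v))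
        (fun u v : A => u * v) a x y = 0 := by rw [h b]; rfl
    have hk := key1 a b x y
    rw [T1, T2] at hk
    simp only [smul_zero, neg_zero, sub_zero, zero_sub, add_eq_zero_iff_eq_neg] at hk
    -- hk : 3 • E1 = - W
    show _ = (- opBr _ _) x y
    have : (- opBr (fun x : A => ((3 : F)⁻¹ • (2 • (a * b) + b * a)) * x)
        (fun x y : A => x * y)) x y
        = - opBr (fun z : A => ((3 : F)⁻¹ • (2 • (a * b) + b * a)) * z)
            (fun u v : A => u * v) x y := rfl
    rw [this, hscale]
    apply cancel3
    rw [h3z, hk, smul_neg, smul_smul, mul_inv_cancel₀ hchar, one_smul]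
  · intro h a
    funext x y z
    have C0 : ∀ p q : A, (3 : ℤ) • (opBr (fun w : A => q * w)
          (opBr (fun w : A => p * w) (fun u v : A => u * v)) y z)
        + opBr (fun w : A => (2 • (p * q) + q * p) * w) (fun u v : A => u * v) y z = 0 := by
      intro p q
      have hpq := congrFun (congrFun (h p q) y) z
      rw [show (- opBr (fun x : A => ((3 : F)⁻¹ • (2 • (p * q) + q * p)) * x)
          (fun x y : A => x * y)) y z
          = - opBr (fun w : A => ((3 : F)⁻¹ • (2 • (p * q) + q * p)) * w)
              (fun u v : A => u * v) y z from rfl, hscale] at hpq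
      rw [← h3z, hpq, smul_neg, smul_smul, mul_inv_cancel₀ hchar, one_smul, neg_add_cancel]
    have hk := key2 a x y z
    rw [C0 a x, C0 x a] at hk
    simp only [smul_zero, neg_zero, add_zero, zero_add] at hk
    rw [show (0 : A → A → A → A) x y z = 0 from rfl]
    apply cancel3
    rw [h3z, hk, smul_zero]
end

section
/- Let V be a finite-dimensional vector space, fix a nonzero u ∈ V, and let U(V) be the space of all bilinear maps on V with the Kantor product (A △_u B)(x,y) = A(u,B(x,y)) − B(A(u,x),y) − B(x,A(u,y)). Then (U(V), △_u) is a conservative algebra with associated multiplication (A ▽_u B)(x,y) = −B(u,A(x,y)). -/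
/-- The Kantor product on the space `U(V)` of bilinear operations on `V`:
`(A △_u B)(x,y) = A(u,B(x,y)) − B(A(u,x),y) − B(x,A(u,y))`. -/
def kantor {F V : Type*} [Field F] [AddCommGroup V] [Module F V]
    (u : V) (A B : V →ₗ[F] V →ₗ[F] V) : V →ₗ[F] V →ₗ[F] V :=
  LinearMap.mk₂ F (fun x y => A u (B x y) - B (A u x) y - B x (A u y))
    (fun x x' y => by simp only [map_add, LinearMap.add_apply]; abel)
    (fun c x y => by simp only [map_smul, LinearMap.smul_apply, smul_sub])
    (fun x y y' => by simp only [map_add, LinearMap.add_apply]; abel)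
    (fun c x y => by simp only [map_smul, LinearMap.smul_apply, smul_sub])

/-- `(U(V), △_u)` is a conservative algebra with associated multiplication
`(A ▽_u B)(x,y) = −B(u,A(x,y))`:  `[L_B,[L_A,△_u]] = −[L_{A ▽_u B}, △_u]`. -/
theorem stmt5 {F V : Type*} [Field F] [AddCommGroup V] [Module F V] [FiniteDimensional F V]
    (u : V) (hu : u ≠ 0) (A B : V →ₗ[F] V →ₗ[F] V) :
    opBr (kantor u B) (opBr (kantor u A) (kantor u))
      = - opBr (kantor u (-(LinearMap.compr₂ A (B u)))) (kantor u) := by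
  funext W C
  ext x y
  simp only [opBr, kantor, Pi.neg_apply, LinearMap.mk₂_apply, LinearMap.neg_apply,
    LinearMap.sub_apply, map_sub, map_neg, LinearMap.compr₂_apply, LinearMap.neg_apply]
  abel
end

section
/- Let V be a vector space, u ∈ V nonzero, and U(V) the algebra of bilinear maps on V under the Kantor product △_u. For any A ∈ U(V), the inner derivation-like bracket satisfies [L_A, △_b](W,C) = W △_{A(u,b)} C for all b ∈ V and W,C ∈ U(V), where L_A(W) = A △_u W. -/
/-- `[L_A, △_b](W,C) = W △_{A(u,b)} C` for all `b ∈ V`, `W,C ∈ U(V)`,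
where `L_A(W) = A △_u W`. -/
theorem stmt6 {F V : Type*} [Field F] [AddCommGroup V] [Module F V]
    (u : V) (hu : u ≠ 0) (A : V →ₗ[F] V →ₗ[F] V) (b : V)
    (W C : V →ₗ[F] V →ₗ[F] V) :
    opBr (kantor u A) (kantor b) W C = kantor (A u b) W C := by
  ext x y
  simp only [opBr, kantor, LinearMap.mk₂_apply, LinearMap.sub_apply, map_sub,
    LinearMap.coe_mk, AddHom.coe_mk]
  abel
end

section
/- Let M be a conservative algebra with associated multiplication *. Then the operator algebra identity [L_b,[L_a,L_x]] − [L_b,L_{ax}] − [L_a,L_{bx}] + L_{a(bx)} + [L_{a*b},L_x] − L_{(a*b)x} = 0 holds for all a, b, x ∈ M; consequently the span U_0(M) of all L_a and [L_a,L_b], a,b ∈ M, is a Lie subalgebra of gl(M). -/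
section LieSpan

variable {R L ι : Type*} [CommRing R] [LieRing L]

variable (R) in
-- With `ℓ = L`, this is `U₀(M)`.
def spanWithBrackets [Module R L] (ℓ : ι → L) : Submodule R L :=
  Submodule.span R {h : L | (∃ a, h = ℓ a) ∨ (∃ a b, h = ⁅ℓ a, ℓ b⁆)}

variable [LieAlgebra R L] {ℓ : ι → L}

theorem lie_generator_mem_spanWithBrackets
    (hℓ : ∀ a b c, ⁅ℓ a, ⁅ℓ b, ℓ c⁆⁆ ∈ spanWithBrackets R ℓ) (a : ι) {g : L}
    (hg : g ∈ spanWithBrackets R ℓ) : ⁅ℓ a, g⁆ ∈ spanWithBrackets R ℓ := by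
  induction hg using Submodule.span_induction with
  | mem h hh =>
    rcases hh with ⟨c, rfl⟩ | ⟨c, d, rfl⟩
    · exact Submodule.subset_span (Or.inr ⟨a, c, rfl⟩)
    · exact hℓ a c d
  | zero => simpa only [lie_zero] using Submodule.zero_mem _
  | add u v _ _ hu hv => simpa only [lie_add] using Submodule.add_mem _ hu hv
  | smul t u _ hu => simpa only [lie_smul] using Submodule.smul_mem _ t hu

theorem lie_mem_spanWithBrackets
    (hℓ : ∀ a b c, ⁅ℓ a, ⁅ℓ b, ℓ c⁆⁆ ∈ spanWithBrackets R ℓ) {f g : L}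
    (hf : f ∈ spanWithBrackets R ℓ) (hg : g ∈ spanWithBrackets R ℓ) :
    ⁅f, g⁆ ∈ spanWithBrackets R ℓ := by
  have hgen := lie_generator_mem_spanWithBrackets hℓ
  induction hf using Submodule.span_induction with
  | mem h hh =>
    rcases hh with ⟨c, rfl⟩ | ⟨c, d, rfl⟩
    · exact hgen c hg
    · rw [lie_lie]
      exact Submodule.sub_mem _ (hgen c (hgen d hg)) (hgen d (hgen c hg))
  | zero => simpa only [zero_lie] using Submodule.zero_mem _
  | add u v _ _ hu hv => simpa only [add_lie] using Submodule.add_mem _ hu hv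
  | smul t u _ hu => simpa only [smul_lie] using Submodule.smul_mem _ t hu

end LieSpan

theorem mulLeft_identity_of_opBr_eq {R A : Type*} [CommRing R] [NonUnitalNonAssocRing A]
    [Module R A] [SMulCommClass R A A] [IsScalarTower R A A] {a b c : A}
    (h : opBr (fun x : A => b * x) (opBr (fun x : A => a * x) (fun x y : A => x * y))
        = - opBr (fun x : A => c * x) (fun x y : A => x * y)) (x : A) :
    ⁅(LinearMap.mulLeft R b : Module.End R A),
        ⁅(LinearMap.mulLeft R a : Module.End R A), LinearMap.mulLeft R x⁆⁆
      - ⁅(LinearMap.mulLeft R b : Module.End R A), LinearMap.mulLeft R (a * x)⁆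
      - ⁅(LinearMap.mulLeft R a : Module.End R A), LinearMap.mulLeft R (b * x)⁆
      + LinearMap.mulLeft R (a * (b * x))
      + ⁅(LinearMap.mulLeft R c : Module.End R A), LinearMap.mulLeft R x⁆
      - LinearMap.mulLeft R (c * x) = 0 := by
  ext y
  have hxy := congrFun (congrFun h x) y
  simp only [opBr, Pi.neg_apply, mul_sub, eq_neg_iff_add_eq_zero] at hxy
  simp only [Ring.lie_def, LinearMap.sub_apply, LinearMap.add_apply, Module.End.mul_apply,
    LinearMap.mulLeft_apply, LinearMap.zero_apply, mul_sub]
  rw [← hxy]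
  abel

/-- For a conservative algebra `M` with associated multiplication `*`, the operator
identity `[L_b,[L_a,L_x]] − [L_b,L_{ax}] − [L_a,L_{bx}] + L_{a(bx)} + [L_{a*b},L_x]
− L_{(a*b)x} = 0` holds, and consequently the span of all `L_a` and `[L_a,L_b]`
is a Lie subalgebra of `gl(M)`. -/
theorem stmt8 {F A : Type*} [Field F] [NonUnitalNonAssocRing A] [Module F A]
    [SMulCommClass F A A] [IsScalarTower F A A]
    (star : A → A → A)
    (hcons : ∀ a b : A,
      opBr (fun x : A => b * x) (opBr (fun x : A => a * x) (fun x y : A => x * y))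
        = - opBr (fun x : A => star a b * x) (fun x y : A => x * y)) :
    (∀ a b x : A,
      ⁅(LinearMap.mulLeft F b : Module.End F A),
          ⁅(LinearMap.mulLeft F a : Module.End F A), LinearMap.mulLeft F x⁆⁆
        - ⁅(LinearMap.mulLeft F b : Module.End F A), LinearMap.mulLeft F (a * x)⁆
        - ⁅(LinearMap.mulLeft F a : Module.End F A), LinearMap.mulLeft F (b * x)⁆
        + LinearMap.mulLeft F (a * (b * x))
        + ⁅(LinearMap.mulLeft F (star a b) : Module.End F A), LinearMap.mulLeft F x⁆
        - LinearMap.mulLeft F (star a b * x) = 0) ∧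
    (∀ f g : Module.End F A,
      f ∈ Submodule.span F {h : Module.End F A |
            (∃ a : A, h = LinearMap.mulLeft F a) ∨
            (∃ a b : A, h = ⁅(LinearMap.mulLeft F a : Module.End F A),
                              LinearMap.mulLeft F b⁆)} →
      g ∈ Submodule.span F {h : Module.End F A |
            (∃ a : A, h = LinearMap.mulLeft F a) ∨
            (∃ a b : A, h = ⁅(LinearMap.mulLeft F a : Module.End F A),
                              LinearMap.mulLeft F b⁆)} →
      ⁅f, g⁆ ∈ Submodule.span F {h : Module.End F A |
            (∃ a : A, h = LinearMap.mulLeft F a) ∨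
            (∃ a b : A, h = ⁅(LinearMap.mulLeft F a : Module.End F A),
                              LinearMap.mulLeft F b⁆)}) := by
  -- Not a global instance; its bracket is the ring commutator of the statement.
  let _ := LieRing.ofAssociativeRing (A := Module.End F A)
  set ℓ : A → Module.End F A := fun a => LinearMap.mulLeft F a
  have identity (a b x : A) := mulLeft_identity_of_opBr_eq (R := F) (hcons a b) x
  refine ⟨identity, fun f g => lie_mem_spanWithBrackets (ℓ := ℓ) fun b a x => ?_⟩
  have mem_gen (a : A) : ℓ a ∈ spanWithBrackets F ℓ := Submodule.subset_span (Or.inl ⟨a, rfl⟩)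
  have mem_lie (a b : A) : ⁅ℓ a, ℓ b⁆ ∈ spanWithBrackets F ℓ :=
    Submodule.subset_span (Or.inr ⟨a, b, rfl⟩)
  have expand : ⁅ℓ b, ⁅ℓ a, ℓ x⁆⁆ = ⁅ℓ b, ℓ (a * x)⁆ + ⁅ℓ a, ℓ (b * x)⁆
      - ℓ (a * (b * x)) - ⁅ℓ (star a b), ℓ x⁆ + ℓ (star a b * x) := by
    rw [← sub_eq_zero, ← identity a b x]
    abel
  rw [expand]
  exact Submodule.add_mem _ (Submodule.sub_mem _ (Submodule.sub_mem _
    (Submodule.add_mem _ (mem_lie b _) (mem_lie a _)) (mem_gen _)) (mem_lie _ x)) (mem_gen _)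
end

section
/- Let M be a conservative algebra with associated multiplication *. Then for all a, b ∈ M, the linear operator [L_b,L_a] − L_{b*a − a*b} is a derivation of M. -/
/-- In a conservative algebra with associated multiplication `*`, the operator
`[L_b,L_a] − L_{b*a − a*b}` is a derivation for all `a, b`. -/
theorem stmt9 {A : Type*} [NonUnitalNonAssocRing A]
    (star : A → A → A)
    (hcons : ∀ a b : A,
      opBr (fun x : A => b * x) (opBr (fun x : A => a * x) (fun x y : A => x * y))
        = - opBr (fun x : A => star a b * x) (fun x y : A => x * y))
    (a b : A) :
    ∀ x y : A,
      (b * (a * (x * y)) - a * (b * (x * y)) - (star b a - star a b) * (x * y))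
        = (b * (a * x) - a * (b * x) - (star b a - star a b) * x) * y
          + x * (b * (a * y) - a * (b * y) - (star b a - star a b) * y) := by
  intro x y
  have h1 := congrFun (congrFun (hcons a b) x) y
  have h2 := congrFun (congrFun (hcons b a) x) y
  simp only [opBr, Pi.neg_apply, mul_sub, sub_mul] at h1 h2 ⊢
  linear_combination (norm := abel) h1 - h2
end

section
/- Let M be a terminal algebra over a field of characteristic ≠ 3 (equivalently, conservative with associated multiplication a*b = (2/3)ab + (1/3)ba). Then for all a, b ∈ M the linear transformation [L_a,L_b] − (1/3)L_{[a,b]} is a derivation of M, where [a,b] = ab − ba. -/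
/-- In a terminal algebra over a field of characteristic ≠ 3 (i.e. conservative with
associated multiplication `a*b = (2/3)ab + (1/3)ba`), the operator
`[L_a,L_b] − (1/3)L_{[a,b]}` is a derivation for all `a, b`, where `[a,b] = ab − ba`. -/
theorem stmt10 {F A : Type*} [Field F] [NonUnitalNonAssocRing A] [Module F A]
    [SMulCommClass F A A] [IsScalarTower F A A] (hchar : (3 : F) ≠ 0)
    (hcons : ∀ a b : A,
      opBr (fun x : A => b * x) (opBr (fun x : A => a * x) (fun x y : A => x * y))
        = - opBr (fun x : A => ((3 : F)⁻¹ • (2 • (a * b) + b * a)) * x)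
            (fun x y : A => x * y))
    (a b : A) :
    ∀ x y : A,
      (a * (b * (x * y)) - b * (a * (x * y)) - (3 : F)⁻¹ • ((a * b - b * a) * (x * y)))
        = (a * (b * x) - b * (a * x) - (3 : F)⁻¹ • ((a * b - b * a) * x)) * y
          + x * (a * (b * y) - b * (a * y) - (3 : F)⁻¹ • ((a * b - b * a) * y)) := by
  intro x y
  have h1 := congrFun (congrFun (hcons a b) x) y
  have h2 := congrFun (congrFun (hcons b a) x) y
  simp only [opBr, Pi.neg_apply, smul_mul_assoc, add_mul, two_smul, mul_sub, sub_mul,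
    mul_add, smul_add, smul_sub, neg_sub] at h1 h2 ⊢
  linear_combination (norm := module) h2 - h1
end

section
/- Let M be a conservative algebra with Jacobi subspace J and associated multiplication *. Then for all a, b ∈ M: if a ∈ J then a*b ∈ J, and if b ∈ J then a*b + ba ∈ J. Moreover, if *₁ and *₂ are two associated multiplications for M, then a *₁ b − a *₂ b ∈ J for all a, b. -/
/-- For a conservative algebra with Jacobi subspace `J`: if `a ∈ J` then `a*b ∈ J`;
if `b ∈ J` then `a*b + ba ∈ J`; and any two associated multiplications agree mod `J`. -/
theorem stmt12 {A : Type*} [NonUnitalNonAssocRing A] :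
    let J : Set A := {a : A | ∀ x y : A, a * (x * y) = (a * x) * y + x * (a * y)}
    (∀ star : A → A → A,
      (∀ a b : A,
        opBr (fun x : A => b * x) (opBr (fun x : A => a * x) (fun x y : A => x * y))
          = - opBr (fun x : A => star a b * x) (fun x y : A => x * y)) →
      ∀ a b : A, (a ∈ J → star a b ∈ J) ∧ (b ∈ J → star a b + b * a ∈ J)) ∧
    (∀ star₁ star₂ : A → A → A,
      (∀ a b : A,
        opBr (fun x : A => b * x) (opBr (fun x : A => a * x) (fun x y : A => x * y))
          = - opBr (fun x : A => star₁ a b * x) (fun x y : A => x * y)) →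
      (∀ a b : A,
        opBr (fun x : A => b * x) (opBr (fun x : A => a * x) (fun x y : A => x * y))
          = - opBr (fun x : A => star₂ a b * x) (fun x y : A => x * y)) →
      ∀ a b : A, star₁ a b - star₂ a b ∈ J) := by
  intro J
  constructor
  · intro star h a b
    constructor
    · intro ha x y
      have ha' : ∀ x y : A, a * (x * y) = a * x * y + x * (a * y) := ha
      have e := congrFun (congrFun (h a b) x) y
      simp only [opBr, Pi.neg_apply] at e
      simp only [mul_sub, mul_add, add_mul, ha'] at e
      linear_combination (norm := abel) e
    · intro hb x y
      have hb' : ∀ x y : A, b * (x * y) = b * x * y + x * (b * y) := hb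
      have e := congrFun (congrFun (h a b) x) y
      simp only [opBr, Pi.neg_apply] at e
      simp only [mul_sub, mul_add, add_mul, hb'] at e
      simp only [add_mul, mul_add]
      linear_combination (norm := abel) e
  · intro star₁ star₂ h₁ h₂ a b x y
    have e := ((congrFun (congrFun (h₁ a b) x) y).symm.trans
      (congrFun (congrFun (h₂ a b) x) y))
    simp only [opBr, Pi.neg_apply] at e
    have e' := neg_inj.mp e
    simp only [sub_mul, mul_sub]
    linear_combination (norm := abel) e'
end

section
/- Let M be an algebra, J its Jacobi subspace, and a ∈ M, b ∈ J. Then [L_b,[L_a,M]] = [L_{ba},M], where [φ,M](x,y) = φ(xy) − φ(x)y − xφ(y). -/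
/-- If `b` is a Jacobi element (`L_b` is a derivation), then
`[L_b,[L_a,M]] = [L_{ba},M]` for every `a`. -/
theorem stmt13 {A : Type*} [NonUnitalNonAssocRing A] (a b : A)
    (hb : ∀ x y : A, b * (x * y) = (b * x) * y + x * (b * y)) :
    opBr (fun x : A => b * x) (opBr (fun x : A => a * x) (fun x y : A => x * y))
      = opBr (fun x : A => (b * a) * x) (fun x y : A => x * y) := by
  funext x y
  simp only [opBr, mul_sub, sub_mul, hb]
  simp only [mul_add, add_mul]
  abel
end

section
/- Let M be an algebra with a left quasiunity e, i.e. e(xy) = (ex)y + x(ey) − xy for all x, y. Then for every a ∈ M, [L_e,[L_a,M]] = [L_{ea−2a},M]. -/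
/-- If `e` is a left quasiunity (`e(xy) = (ex)y + x(ey) − xy`), then
`[L_e,[L_a,M]] = [L_{ea−2a},M]` for every `a`. -/
theorem stmt14 {A : Type*} [NonUnitalNonAssocRing A] (e : A)
    (he : ∀ x y : A, e * (x * y) = (e * x) * y + x * (e * y) - x * y) (a : A) :
    opBr (fun x : A => e * x) (opBr (fun x : A => a * x) (fun x y : A => x * y))
      = opBr (fun x : A => (e * a - 2 • a) * x) (fun x y : A => x * y) := by
  funext x y
  simp only [opBr, mul_sub, sub_mul, mul_add, add_mul, two_smul, he, mul_smul_comm,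
    smul_mul_assoc]
  abel
end

section
/- Let M be a conservative algebra with a left quasiunity e, associated multiplication *, and Jacobi subspace J. Then for every a ∈ M: e*a ≡ a (mod J) and a*e ≡ 2a − ea (mod J). -/
/-- In a conservative algebra with left quasiunity `e`, associated multiplication `*`
and Jacobi subspace `J`:  `e*a ≡ a (mod J)` and `a*e ≡ 2a − ea (mod J)`. -/
theorem stmt15 {A : Type*} [NonUnitalNonAssocRing A]
    (star : A → A → A)
    (hcons : ∀ a b : A,
      opBr (fun x : A => b * x) (opBr (fun x : A => a * x) (fun x y : A => x * y))
        = - opBr (fun x : A => star a b * x) (fun x y : A => x * y))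
    (e : A) (he : ∀ x y : A, e * (x * y) = (e * x) * y + x * (e * y) - x * y)
    (a : A) :
    let J : Set A := {c : A | ∀ x y : A, c * (x * y) = (c * x) * y + x * (c * y)}
    star e a - a ∈ J ∧ star a e - (2 • a - e * a) ∈ J := by
  intro J
  constructor
  · intro x y
    have h1 := congrFun (congrFun (hcons e a) x) y
    simp only [opBr, Pi.neg_apply, he, mul_sub, sub_mul, mul_add, add_mul, neg_sub] at h1
    simp only [sub_mul, mul_sub]
    linear_combination (norm := abel) h1
  · intro x y
    have h1 := congrFun (congrFun (hcons a e) x) y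
    simp only [opBr, Pi.neg_apply, he, mul_sub, sub_mul, mul_add, add_mul, neg_sub] at h1
    simp only [sub_mul, mul_sub, two_smul, add_mul, smul_mul_assoc, mul_smul_comm]
    linear_combination (norm := (abel_nf; simp only [mul_smul_comm]; abel)) h1
end

section
/- Let V be a vector space, u ∈ V nonzero, and (U(V), △_u) the Kantor algebra of bilinear maps on V. The Jacobi subspace J of (U(V), △_u) equals {A ∈ U(V) : A(u,u) = 0}. Moreover U(V) has no nonzero Jacobi ideals: if I is an ideal of (U(V), △_u) contained in J, then I = 0. -/
section Kantor

variable {F V : Type*} [Field F] [AddCommGroup V] [Module F V]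

def IsJacobiElement (u : V) (A : V →ₗ[F] V →ₗ[F] V) : Prop :=
  ∀ W C : V →ₗ[F] V →ₗ[F] V,
    kantor u A (kantor u W C) = kantor u (kantor u A W) C + kantor u W (kantor u A C)

theorem kantor_apply (u : V) (A B : V →ₗ[F] V →ₗ[F] V) (x y : V) :
    kantor u A B x y = A u (B x y) - B (A u x) y - B x (A u y) :=
  rfl

@[simp]
theorem kantor_zero (W C : V →ₗ[F] V →ₗ[F] V) : kantor 0 W C = 0 := by
  ext x y
  simp [kantor_apply]

theorem kantor_jacobiator (u : V) (A W C : V →ₗ[F] V →ₗ[F] V) :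
    kantor u A (kantor u W C) - kantor u (kantor u A W) C - kantor u W (kantor u A C)
      = kantor (A u u) W C := by
  ext x y
  simp only [LinearMap.sub_apply, kantor_apply, map_sub]
  abel

theorem isJacobiElement_iff_forall_kantor_eq_zero (u : V) (A : V →ₗ[F] V →ₗ[F] V) :
    IsJacobiElement u A ↔ ∀ W C : V →ₗ[F] V →ₗ[F] V, kantor (A u u) W C = 0 := by
  refine forall₂_congr fun W C => ?_
  rw [← kantor_jacobiator, sub_sub, sub_eq_zero]

theorem kantor_smulRight_id_self {v : V} {g : Module.Dual F V} (hg : g v = 1) :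
    kantor v (g.smulRight LinearMap.id) (g.smulRight LinearMap.id)
      = -g.smulRight (LinearMap.id : V →ₗ[F] V) := by
  ext x y
  simp only [kantor_apply, LinearMap.smulRight_apply, LinearMap.smul_apply, LinearMap.id_apply,
    hg, one_smul, LinearMap.neg_apply]
  abel

theorem forall_kantor_eq_zero_iff (v : V) :
    (∀ W C : V →ₗ[F] V →ₗ[F] V, kantor v W C = 0) ↔ v = 0 := by
  refine ⟨fun h => ?_, fun hv => by simp [hv]⟩
  by_contra hv
  obtain ⟨g, hg⟩ := Module.Projective.exists_dual_eq_one F hv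
  have hW := h (g.smulRight LinearMap.id) (g.smulRight LinearMap.id)
  rw [kantor_smulRight_id_self hg, neg_eq_zero] at hW
  apply hv
  simpa [hg] using LinearMap.congr_fun₂ hW v v

theorem isJacobiElement_iff (u : V) (A : V →ₗ[F] V →ₗ[F] V) :
    IsJacobiElement u A ↔ A u u = 0 := by
  rw [isJacobiElement_iff_forall_kantor_eq_zero, forall_kantor_eq_zero_iff]

theorem exists_apply_apply_eq {u : V} (hu : u ≠ 0) (v : V) :
    ∃ B : V →ₗ[F] V →ₗ[F] V, B u u = v := by
  obtain ⟨g, hg⟩ := Module.Projective.exists_dual_eq_one F hu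
  exact ⟨g.smulRight (g.smulRight v), by simp [hg]⟩

theorem kantor_apply_self_self {u : V} {M : V →ₗ[F] V →ₗ[F] V} (hM : M u u = 0)
    (B : V →ₗ[F] V →ₗ[F] V) : kantor u M B u u = M u (B u u) := by
  simp [kantor_apply, hM]

theorem kantor_apply_self {u : V} {M : V →ₗ[F] V →ₗ[F] V} (hM : M u = 0)
    (B : V →ₗ[F] V →ₗ[F] V) : kantor u B M u = -M (B u u) := by
  ext y
  simp [kantor_apply, hM]

end Kantor

/-- The Jacobi subspace of `(U(V), △_u)` is `{A : A(u,u) = 0}`, and `U(V)` has no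
nonzero Jacobi ideals. -/
theorem stmt16 {F V : Type*} [Field F] [AddCommGroup V] [Module F V]
    (u : V) (hu : u ≠ 0) :
    ({A : V →ₗ[F] V →ₗ[F] V | ∀ W C : V →ₗ[F] V →ₗ[F] V,
        kantor u A (kantor u W C)
          = kantor u (kantor u A W) C + kantor u W (kantor u A C)}
      = {A : V →ₗ[F] V →ₗ[F] V | A u u = 0}) ∧
    (∀ I : Set (V →ₗ[F] V →ₗ[F] V),
      (∀ A ∈ I, ∀ B : V →ₗ[F] V →ₗ[F] V, kantor u A B ∈ I ∧ kantor u B A ∈ I) →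
      (I ⊆ {A : V →ₗ[F] V →ₗ[F] V | ∀ W C : V →ₗ[F] V →ₗ[F] V,
        kantor u A (kantor u W C)
          = kantor u (kantor u A W) C + kantor u W (kantor u A C)}) →
      ∀ A ∈ I, A = 0) := by
  refine ⟨Set.ext fun A => isJacobiElement_iff u A, fun I hI hIJ => ?_⟩
  replace hIJ : ∀ M ∈ I, M u u = 0 := fun M hM => (isJacobiElement_iff u M).1 (hIJ hM)
  have hIu : ∀ M ∈ I, M u = 0 := fun M hM => by
    ext y
    obtain ⟨B, rfl⟩ := exists_apply_apply_eq (F := F) hu y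
    simpa [kantor_apply_self_self (hIJ M hM)] using hIJ _ (hI M hM B).1
  intro A hA
  ext x y
  obtain ⟨B, rfl⟩ := exists_apply_apply_eq (F := F) hu x
  simpa [kantor_apply_self (hIu A hA)] using LinearMap.congr_fun (hIu _ (hI A hA B).2) y
end

section
/- Let (U_{-1}, U_0, U_1) be a triple of vector spaces with bilinear brackets [U_{-1},U_0] ⊆ U_{-1}, [U_0,U_0] ⊆ U_0, [U_1,U_0] ⊆ U_1, [U_{-1},U_1] ⊆ U_0, anticommutative and satisfying the Jacobi identity whenever all terms are defined. For a ∈ U_{-1}, define M_a : U_1 × U_1 → U_1 by M_a(x,y) = [[a,x],y], and for x ∈ U_1 define M_x : U_{-1} × U_{-1} → U_{-1} analogously by M_x(b,c) = [[x,b],c]. Then for every a ∈ U_{-1}, the map x ↦ −M_x from the algebra (U_1, M_a) to the Kantor algebra (U(U_{-1}), △_a) is an algebra homomorphism. -/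
/-- The Kantor product on (not necessarily linear) binary operations on a space `V`,
relative to a fixed element `a`:
`(A △_a B)(b,c) = A(a,B(b,c)) − B(A(a,b),c) − B(b,A(a,c))`. -/
def kantorF {V : Type*} [AddCommGroup V] (a : V) (A B : V → V → V) : V → V → V :=
  fun b c => A a (B b c) - B (A a b) c - B b (A a c)

/-- Given a triple `(U₋₁, U₀, U₁)` with anticommutative brackets
`[U₋₁,U₀] ⊆ U₋₁`, `[U₀,U₀] ⊆ U₀`, `[U₁,U₀] ⊆ U₁`, `[U₋₁,U₁] ⊆ U₀`
satisfying the Jacobi identity whenever defined (hypotheses `hJ1`–`hJ4`, written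
via the brackets `bm0 a h = [a,h]`, `b00 h k = [h,k]`, `bp0 x h = [x,h]`,
`bmp a x = [a,x]`, and using `[y,x] = −[x,y]` for the remaining brackets),
the map `x ↦ −M_x` (where `M_x(b,c) = [[x,b],c] = bm0 c (bmp b x)`) is a
homomorphism from `(U₁, M_a)` (with `M_a(x,y) = [[a,x],y] = −bp0 y (bmp a x)`)
to the Kantor algebra `(U(U₋₁), △_a)`. -/
theorem stmt18 {F Um U0 Up : Type*} [Field F]
    [AddCommGroup Um] [Module F Um] [AddCommGroup U0] [Module F U0]
    [AddCommGroup Up] [Module F Up]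
    (bm0 : Um →ₗ[F] U0 →ₗ[F] Um) (b00 : U0 →ₗ[F] U0 →ₗ[F] U0)
    (bp0 : Up →ₗ[F] U0 →ₗ[F] Up) (bmp : Um →ₗ[F] Up →ₗ[F] U0)
    (hskew : ∀ h k : U0, b00 h k = - b00 k h)
    (hJ1 : ∀ (a : Um) (h k : U0),
      bm0 (bm0 a h) k = bm0 a (b00 h k) + bm0 (bm0 a k) h)
    (hJ2 : ∀ (x : Up) (h k : U0),
      bp0 (bp0 x h) k = bp0 x (b00 h k) + bp0 (bp0 x k) h)
    (hJ3 : ∀ h k l : U0,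
      b00 (b00 h k) l = b00 h (b00 k l) - b00 k (b00 h l))
    (hJ4 : ∀ (a : Um) (x : Up) (h : U0),
      b00 (bmp a x) h = bmp a (bp0 x h) + bmp (bm0 a h) x)
    (a : Um) (x y : Up) :
    (fun b c : Um => -(bm0 c (bmp b (-(bp0 y (bmp a x))))))
      = kantorF a (fun b c : Um => -(bm0 c (bmp b x)))
          (fun b c : Um => -(bm0 c (bmp b y))) := by
  funext b c
  have e1 : bmp b (bp0 y (bmp a x))
      = b00 (bmp b y) (bmp a x) - bmp (bm0 b (bmp a x)) y := by
    rw [hJ4 b y (bmp a x)]; abel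
  have e2 : bm0 c (b00 (bmp b y) (bmp a x))
      = bm0 (bm0 c (bmp b y)) (bmp a x) - bm0 (bm0 c (bmp a x)) (bmp b y) := by
    rw [hJ1 c (bmp b y) (bmp a x)]; abel
  simp only [kantorF, map_neg, LinearMap.neg_apply, neg_neg]
  rw [e1, map_sub, e2]
  abel
end

section
/- Let V be a vector space, u ∈ V nonzero, and W_u(V) ⊆ U(V) the subspace of symmetric bilinear maps on V. Then W_u(V) is a subalgebra of the Kantor algebra (U(V), △_u), and it is terminal: it is conservative with associated multiplication A*B = (2/3) A △_u B + (1/3) B △_u A. In particular, (A ▽²_u B)(x,y) := (1/3)((A + Aᵗ) △_u B + B̃ △_u A), with Aᵗ(x,y)=A(y,x) and B̃(x,y) = 2B(y,x) − B(x,y), restricts on symmetric operations to (2/3)A △_u B + (1/3)B △_u A. -/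
set_option maxHeartbeats 8000000 in
/-- The symmetric bilinear maps form a subalgebra `W_u(V)` of `(U(V), △_u)` which is
terminal: conservative with associated multiplication
`A*B = (2/3) A △_u B + (1/3) B △_u A`; moreover the general associated
multiplication `▽²_u` of `U(V)` restricts to exactly this on symmetric operations. -/
theorem stmt19 {F V : Type*} [Field F] [AddCommGroup V] [Module F V]
    (h3 : (3 : F) ≠ 0) (u : V) (hu : u ≠ 0) :
    -- W_u(V) is a subalgebra
    (∀ A B : V →ₗ[F] V →ₗ[F] V, (∀ x y : V, A x y = A y x) → (∀ x y : V, B x y = B y x) →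
      ∀ x y : V, kantor u A B x y = kantor u A B y x) ∧
    -- W_u(V) is conservative with associated multiplication (2/3)A△B + (1/3)B△A,
    -- i.e. terminal
    (∀ A B W C : V →ₗ[F] V →ₗ[F] V,
      (∀ x y : V, A x y = A y x) → (∀ x y : V, B x y = B y x) →
      (∀ x y : V, W x y = W y x) → (∀ x y : V, C x y = C y x) →
      opBr (kantor u B) (opBr (kantor u A) (kantor u)) W C
        = -(opBr (kantor u ((3 : F)⁻¹ • (2 • kantor u A B + kantor u B A)))
              (kantor u) W C)) ∧
    -- (A ▽²_u B) = (1/3)((A + Aᵗ) △_u B + B̃ △_u A) restricts on symmetric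
    -- operations to (2/3)A △_u B + (1/3)B △_u A
    (∀ A B : V →ₗ[F] V →ₗ[F] V,
      (∀ x y : V, A x y = A y x) → (∀ x y : V, B x y = B y x) →
      (3 : F)⁻¹ • (kantor u (A + A.flip) B + kantor u (2 • B.flip - B) A)
        = (3 : F)⁻¹ • (2 • kantor u A B + kantor u B A)) := by
  refine ⟨?_, ?_, ?_⟩
  · intro A B hA hB x y
    simp only [kantor, LinearMap.mk₂_apply]
    rw [hB x y, hB (A u x) y, hB x (A u y)]
    abel
  · intro A B W C hA hB hW hC
    ext x y
    simp only [opBr, kantor, LinearMap.mk₂_apply, LinearMap.sub_apply, LinearMap.add_apply,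
      LinearMap.smul_apply, LinearMap.neg_apply, map_sub, map_add, map_smul, map_nsmul,
      smul_sub, smul_add, neg_sub]
    rw [hA (B u u) u, hB (A u u) u]
    match_scalars <;> (field_simp; try ring)
  · intro A B hA hB
    ext x y
    simp only [kantor, LinearMap.mk₂_apply, LinearMap.smul_apply, LinearMap.add_apply,
      LinearMap.sub_apply, LinearMap.flip_apply, map_add, map_sub, map_nsmul, map_smul,
      smul_sub, smul_add]
    rw [hA x u, hA y u, hA (B x y) u, hB x u, hB y u, hB (A x y) u]
    module
end
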